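/- arXiv:2602.08151 — 8 statements merged into one kernel-verified Lean document; each statement's English description precedes it below -/
import Mathlib

section
/- Let X be a random variable with values in [a,b] and mean μ. Then Var(X)/μ ≤ (√b − √a)² ≤ b − a, provided 0 ≤ a and μ > 0. In particular, by the Bhatia–Davis inequality Var(X) ≤ (b−μ)(μ−a), and the function μ ↦ (b−μ)(μ−a)/μ is maximized at μ = √(ab) with value (√b−√a)². -/
open MeasureTheory ProbabilityTheory

/-- Bhatia–Davis style bound: for a random variable X with values in [a,b] (0 ≤ a)
    and positive mean μ, Var(X) ≤ (b−μ)(μ−a), and Var(X)/μ ≤ (√b − √a)² ≤ b − a. -/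
theorem bhatia_davis_variance_over_mean {Ω : Type*} [MeasureSpace Ω]
    [IsProbabilityMeasure (ℙ : Measure Ω)]
    (X : Ω → ℝ) (hX : AEMeasurable X ℙ) (a b : ℝ) (ha : 0 ≤ a) (hab : a ≤ b)
    (hbound : ∀ᵐ ω ∂ℙ, X ω ∈ Set.Icc a b)
    (hμ : 0 < ∫ ω, X ω) :
    variance X ℙ ≤ (b - ∫ ω, X ω) * ((∫ ω, X ω) - a) ∧
    variance X ℙ / (∫ ω, X ω) ≤ (Real.sqrt b - Real.sqrt a) ^ 2 ∧
    (Real.sqrt b - Real.sqrt a) ^ 2 ≤ b - a := by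
  have hm2 : MemLp X 2 ℙ := memLp_of_bounded hbound hX.aestronglyMeasurable 2
  have hint : Integrable X ℙ := hm2.integrable (by norm_num)
  have hintsq : Integrable (fun ω => X ω ^ 2) ℙ := hm2.integrable_sq
  set μ := ∫ ω, X ω with hμdef
  have hvar : variance X ℙ = (∫ ω, X ω ^ 2) - μ ^ 2 := variance_eq_sub hm2
  have key : 0 ≤ ∫ ω, (b - X ω) * (X ω - a) := by
    apply integral_nonneg_of_ae
    filter_upwards [hbound] with ω hω
    exact mul_nonneg (by linarith [hω.2]) (by linarith [hω.1])
  have hexp : ∫ ω, (b - X ω) * (X ω - a)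
      = (a + b) * μ - a * b - ∫ ω, X ω ^ 2 := by
    have h1 : ∀ ω, (b - X ω) * (X ω - a)
        = (a + b) * X ω - a * b - X ω ^ 2 := by intro ω; ring
    simp_rw [h1]
    have hI1 : Integrable (fun ω => (a + b) * X ω) ℙ := hint.const_mul _
    have hI2 : Integrable (fun ω => (a + b) * X ω - a * b) ℙ :=
      hI1.sub (integrable_const _)
    rw [integral_sub hI2 hintsq, integral_sub hI1 (integrable_const _),
      MeasureTheory.integral_const_mul, integral_const]
    simp [hμdef]
  have hBD : variance X ℙ ≤ (b - μ) * (μ - a) := by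
    rw [hvar]; nlinarith [key, hexp]
  refine ⟨hBD, ?_, ?_⟩
  · set sa := Real.sqrt a with hsa
    set sb := Real.sqrt b with hsb
    have h1 : sa ^ 2 = a := Real.sq_sqrt ha
    have h2 : sb ^ 2 = b := Real.sq_sqrt (ha.trans hab)
    rw [div_le_iff₀ hμ]
    nlinarith [hBD, sq_nonneg (μ - sa * sb)]
  · have h1 : Real.sqrt a ^ 2 = a := Real.sq_sqrt ha
    have h2 : Real.sqrt b ^ 2 = b := Real.sq_sqrt (ha.trans hab)
    have h3 : Real.sqrt a ≤ Real.sqrt b := Real.sqrt_le_sqrt hab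
    nlinarith [Real.sqrt_nonneg a]
end

section
/- Let f : ℝᵖ → ℝ be C³ on a convex set 𝒞 and suppose that for all x ∈ 𝒞 and all u, v ∈ ℝᵖ, |∇³f(x)[u,u,v]| ≤ M·‖v‖_*·(uᵀ ∇²f(x) u), where ‖·‖_* is any norm on ℝᵖ. Then for any x, y ∈ 𝒞, the semidefinite ordering e^{−M‖y−x‖_*}·∇²f(x) ⪯ ∇²f(y) ⪯ e^{M‖y−x‖_*}·∇²f(x) holds. -/
open Set Filter Topology

section aux

variable {E : Type*} [NormedAddCommGroup E] [NormedSpace ℝ E]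

private lemma gsc_two_apply (f : E → ℝ) (z u : E) :
    iteratedFDeriv ℝ 2 f z ![u, u] = fderiv ℝ (fderiv ℝ f) z u u := by
  rw [iteratedFDeriv_two_apply]
  rfl

private lemma gsc_hasDerivAt (f : E → ℝ) {U : Set E} (hU : IsOpen U)
    (hf : ContDiffOn ℝ 3 f U) (x w u : E) {t : ℝ} (hz : x + t • w ∈ U) :
    HasDerivAt (fun s : ℝ => iteratedFDeriv ℝ 2 f (x + s • w) ![u, u])
      (iteratedFDeriv ℝ 3 f (x + t • w) ![u, u, w]) t := by
  set z := x + t • w with hzdef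
  set F := fderiv ℝ f with hF
  set G := fderiv ℝ F with hG
  have hF2 : ContDiffOn ℝ 2 F U := hf.fderiv_of_isOpen hU (by norm_num)
  have hG1 : ContDiffOn ℝ 1 G U := hF2.fderiv_of_isOpen hU (by norm_num)
  have hGz : DifferentiableAt ℝ G z :=
    (hG1.contDiffAt (hU.mem_nhds hz)).differentiableAt one_ne_zero
  have hγ : HasDerivAt (fun s : ℝ => x + s • w) w t := by
    have h1 : HasDerivAt (fun s : ℝ => s • w) ((1 : ℝ) • w) t :=
      (hasDerivAt_id t).smul_const w
    simpa using h1.const_add x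
  set L : (E →L[ℝ] (E →L[ℝ] ℝ)) →L[ℝ] ℝ :=
    (ContinuousLinearMap.apply ℝ ℝ u).comp (ContinuousLinearMap.apply ℝ (E →L[ℝ] ℝ) u) with hL
  have hc : HasDerivAt (fun s : ℝ => L (G (x + s • w))) (L (fderiv ℝ G z w)) t := by
    have h2 : HasDerivAt (fun s : ℝ => G (x + s • w)) (fderiv ℝ G z w) t :=
      hGz.hasFDerivAt.comp_hasDerivAt (l := G) t hγ
    exact L.hasFDerivAt.comp_hasDerivAt (F := E →L[ℝ] (E →L[ℝ] ℝ)) t h2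
  have hfun : (fun s : ℝ => L (G (x + s • w)))
      = fun s : ℝ => iteratedFDeriv ℝ 2 f (x + s • w) ![u, u] := by
    funext s
    rw [gsc_two_apply]
    simp [hL, hG, hF]
  -- symmetry in the first two slots
  have hsymm1 : fderiv ℝ G z w u = fderiv ℝ G z u w :=
    ((hF2.contDiffAt (hU.mem_nhds hz)).isSymmSndFDerivAt (by simp [minSmoothness_of_isRCLikeNormedField])) w u
  -- symmetry in the last two slots
  have key2 : ∀ a b : E, fderiv ℝ (fun z' => G z' a b) z
      = ((ContinuousLinearMap.apply ℝ ℝ b).comp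
          (ContinuousLinearMap.apply ℝ (E →L[ℝ] ℝ) a)).comp (fderiv ℝ G z) := by
    intro a b
    exact (((ContinuousLinearMap.apply ℝ ℝ b).comp
      (ContinuousLinearMap.apply ℝ (E →L[ℝ] ℝ) a)).hasFDerivAt.comp (F := E →L[ℝ] (E →L[ℝ] ℝ)) (f := G) (f' := fderiv ℝ G z) z hGz.hasFDerivAt).fderiv
  have hEq : (fun z' => G z' w u) =ᶠ[𝓝 z] (fun z' => G z' u w) := by
    filter_upwards [hU.mem_nhds hz] with z' hz'
    exact ((hf.contDiffAt (hU.mem_nhds hz')).isSymmSndFDerivAt (by norm_num)) w u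
  have hsymm2 : fderiv ℝ G z u w u = fderiv ℝ G z u u w := by
    have h3 := Filter.EventuallyEq.fderiv_eq (𝕜 := ℝ) hEq
    rw [key2 w u, key2 u w] at h3
    have := congrFun (congrArg (fun (T : E →L[ℝ] ℝ) => (T : E → ℝ)) h3) u
    simpa using this
  have hval : L (fderiv ℝ G z w) = iteratedFDeriv ℝ 3 f z ![u, u, w] := by
    have h4 : iteratedFDeriv ℝ 3 f z ![u, u, w]
        = iteratedFDeriv ℝ 2 (fun y => fderiv ℝ f y) z (Fin.init ![u, u, w])
            (![u, u, w] (Fin.last 2)) := iteratedFDeriv_succ_apply_right _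
    have h5 : Fin.init ![u, u, w] = ![u, u] := by
      funext i
      fin_cases i <;> rfl
    rw [h5] at h4
    rw [iteratedFDeriv_two_apply] at h4
    have h6 : iteratedFDeriv ℝ 3 f z ![u, u, w] = fderiv ℝ G z u u w := by
      rw [h4]; rfl
    rw [h6]
    have h7 : L (fderiv ℝ G z w) = fderiv ℝ G z w u u := by simp [hL]
    rw [h7, hsymm1]
    exact hsymm2
  rw [hfun, hval] at hc
  exact hc

private lemma gsc_upper (f : E → ℝ) {C U : Set E} (hC : Convex ℝ C)
    (hU : IsOpen U) (hCU : C ⊆ U) (hf : ContDiffOn ℝ 3 f U)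
    {c : ℝ} (hc : 0 ≤ c) (x y u : E) (hx : x ∈ C) (hy : y ∈ C)
    (hb : ∀ z ∈ C, |iteratedFDeriv ℝ 3 f z ![u, u, y - x]|
        ≤ c * iteratedFDeriv ℝ 2 f z ![u, u]) :
    iteratedFDeriv ℝ 2 f y ![u, u] ≤ Real.exp c * iteratedFDeriv ℝ 2 f x ![u, u] := by
  set w := y - x with hw
  set φ : ℝ → ℝ := fun s => iteratedFDeriv ℝ 2 f (x + s • w) ![u, u] with hφ
  set ψ : ℝ → ℝ := fun s => iteratedFDeriv ℝ 3 f (x + s • w) ![u, u, w] with hψ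
  have hmem : ∀ t ∈ Icc (0 : ℝ) 1, x + t • w ∈ C := fun t ht =>
    hC.add_smul_sub_mem hx hy ht
  have hd : ∀ t ∈ Icc (0 : ℝ) 1, HasDerivAt φ (ψ t) t := fun t ht =>
    gsc_hasDerivAt f hU hf x w u (hCU (hmem t ht))
  set h : ℝ → ℝ := fun t => Real.exp (-(c * t)) * φ t with hh
  have hdh : ∀ t ∈ Icc (0 : ℝ) 1,
      HasDerivAt h (Real.exp (-(c * t)) * (ψ t - c * φ t)) t := by
    intro t ht
    have he : HasDerivAt (fun s : ℝ => Real.exp (-(c * s)))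
        (Real.exp (-(c * t)) * (-c)) t := by
      have h1 : HasDerivAt (fun s : ℝ => -(c * s)) (-c) t := by
        have h0 := ((hasDerivAt_id t).const_mul c).neg
        simp only [mul_one] at h0
        exact h0
      exact h1.exp
    have := he.mul (hd t ht)
    exact this.congr_deriv (by ring)
  have hmono : AntitoneOn h (Icc 0 1) := by
    apply antitoneOn_of_deriv_nonpos (convex_Icc 0 1)
    · exact fun t ht => ((hdh t ht).continuousAt.continuousWithinAt)
    · intro t ht
      rw [interior_Icc] at ht
      exact ((hdh t (Ioo_subset_Icc_self ht)).differentiableAt).differentiableWithinAt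
    · intro t ht
      rw [interior_Icc] at ht
      have ht' := Ioo_subset_Icc_self ht
      rw [(hdh t ht').deriv]
      have h1 : ψ t ≤ c * φ t := le_trans (le_abs_self _) (hb _ (hmem t ht'))
      have h2 := (Real.exp_pos (-(c * t))).le
      nlinarith
  have h01 := hmono (left_mem_Icc.2 zero_le_one) (right_mem_Icc.2 zero_le_one) zero_le_one
  have hφ1 : φ 1 = iteratedFDeriv ℝ 2 f y ![u, u] := by
    simp [hφ, hw]
  have hφ0 : φ 0 = iteratedFDeriv ℝ 2 f x ![u, u] := by
    simp [hφ]
  have e1 : Real.exp c * Real.exp (-c) = 1 := by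
    rw [← Real.exp_add]; simp
  have h01' : Real.exp (-(c * 1)) * φ 1 ≤ Real.exp (-(c * 0)) * φ 0 := h01
  rw [hφ1, hφ0] at h01'
  simp only [mul_one, mul_zero, neg_zero, Real.exp_zero, one_mul] at h01'
  have h2 := mul_le_mul_of_nonneg_left h01' (Real.exp_pos c).le
  calc iteratedFDeriv ℝ 2 f y ![u, u]
      = (Real.exp c * Real.exp (-c)) * iteratedFDeriv ℝ 2 f y ![u, u] := by rw [e1, one_mul]
    _ = Real.exp c * (Real.exp (-c) * iteratedFDeriv ℝ 2 f y ![u, u]) := by ring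
    _ ≤ Real.exp c * iteratedFDeriv ℝ 2 f x ![u, u] := h2

end aux

/-- Semidefinite ordering ("sandwich" bound) under (M,2)-generalized
    self-concordance with respect to an arbitrary norm N on ℝᵖ. -/
theorem gsc_sandwich {p : ℕ} (f : EuclideanSpace ℝ (Fin p) → ℝ)
    (C U : Set (EuclideanSpace ℝ (Fin p))) (hC : Convex ℝ C)
    (hU : IsOpen U) (hCU : C ⊆ U) (hf : ContDiffOn ℝ 3 f U)
    (N : Seminorm ℝ (EuclideanSpace ℝ (Fin p)))
    (hNnorm : ∀ v, N v = 0 → v = 0)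
    (M : ℝ) (hM : 0 ≤ M)
    (hsc : ∀ x ∈ C, ∀ u v : EuclideanSpace ℝ (Fin p),
      |iteratedFDeriv ℝ 3 f x ![u, u, v]| ≤ M * N v * iteratedFDeriv ℝ 2 f x ![u, u])
    (x y : EuclideanSpace ℝ (Fin p)) (hx : x ∈ C) (hy : y ∈ C)
    (u : EuclideanSpace ℝ (Fin p)) :
    Real.exp (-(M * N (y - x))) * iteratedFDeriv ℝ 2 f x ![u, u]
        ≤ iteratedFDeriv ℝ 2 f y ![u, u] ∧
    iteratedFDeriv ℝ 2 f y ![u, u]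
        ≤ Real.exp (M * N (y - x)) * iteratedFDeriv ℝ 2 f x ![u, u] := by
  have hupper := gsc_upper f hC hU hCU hf
    (mul_nonneg hM (apply_nonneg N (y - x))) x y u hx hy
    (fun z hz => hsc z hz u (y - x))
  have hlow := gsc_upper f hC hU hCU hf
    (mul_nonneg hM (apply_nonneg N (x - y))) y x u hy hx
    (fun z hz => hsc z hz u (x - y))
  have hNxy : N (x - y) = N (y - x) := by
    rw [show x - y = -(y - x) from (neg_sub y x).symm, map_neg_eq_map]
  rw [hNxy] at hlow
  refine ⟨?_, hupper⟩
  set c := M * N (y - x) with hcdef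
  have e1 : Real.exp (-c) * Real.exp c = 1 := by rw [← Real.exp_add]; simp
  have h2 := mul_le_mul_of_nonneg_left hlow (Real.exp_pos (-c)).le
  calc Real.exp (-c) * iteratedFDeriv ℝ 2 f x ![u, u]
      ≤ Real.exp (-c) * (Real.exp c * iteratedFDeriv ℝ 2 f y ![u, u]) := h2
    _ = (Real.exp (-c) * Real.exp c) * iteratedFDeriv ℝ 2 f y ![u, u] := by ring
    _ = iteratedFDeriv ℝ 2 f y ![u, u] := by rw [e1, one_mul]
end

section
/- Let Ψ(x) = log(∑_{i=1}^n exp(a·x_i)) with a > 0. Then for all x, u, Δ ∈ ℝⁿ, |∇³Ψ(x)[u,u,Δ]| ≤ 2a·‖Δ‖_∞ · (uᵀ ∇²Ψ(x) u); i.e., Ψ is (2a, 2)-generalized self-concordant with respect to the ℓ∞ norm. -/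
/-- The scaled log-sum-exp function Ψ(x) = log ∑ᵢ exp(a xᵢ). -/
noncomputable def lse (a : ℝ) {n : ℕ} (z : Fin n → ℝ) : ℝ :=
  Real.log (∑ i, Real.exp (a * z i))

open Real Finset

section reduction

variable {E : Type*} [NormedAddCommGroup E] [NormedSpace ℝ E] {x : E}

lemma fderiv_apply_const' (f : E → (E →L[ℝ] ℝ)) (hf : DifferentiableAt ℝ f x) (v : E) :
    fderiv ℝ (fun y => f y v) x = (fderiv ℝ f x).flip v := by
  rw [fderiv_clm_apply hf (differentiableAt_const v)]
  simp

lemma iteratedFDeriv_two_apply' (f : E → ℝ) (hf : ContDiff ℝ 2 f) (x u v : E) :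
    iteratedFDeriv ℝ 2 f x ![u, v] = fderiv ℝ (fun y => fderiv ℝ f y v) x u := by
  rw [iteratedFDeriv_two_apply]
  have hd : DifferentiableAt ℝ (fderiv ℝ f) x :=
    ((hf.fderiv_right (m := 1) le_rfl).differentiable (by norm_num)).differentiableAt
  rw [fderiv_apply_const' _ hd]
  simp [Matrix.cons_val_zero, Matrix.cons_val_one]

lemma iteratedFDeriv_three_apply (f : E → ℝ) (hf : ContDiff ℝ 3 f) (x u v w : E) :
    iteratedFDeriv ℝ 3 f x ![u, v, w]
      = fderiv ℝ (fun y => fderiv ℝ (fun z => fderiv ℝ f z w) y v) x u := by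
  have h1 : iteratedFDeriv ℝ 3 f x ![u, v, w]
      = iteratedFDeriv ℝ 2 (fun y => fderiv ℝ f y) x ![u, v] w := by
    rw [iteratedFDeriv_succ_apply_right]
    have e1 : Fin.init ![u, v, w] = ![u, v] := by
      ext i; fin_cases i <;> simp [Fin.init]
    have e2 : ![u, v, w] (Fin.last 2) = w := rfl
    rw [e1, e2]
  rw [h1]
  have hc : ContDiff ℝ 2 (fun y => fderiv ℝ f y) := hf.fderiv_right (by norm_num)
  have h2 : iteratedFDeriv ℝ 2 (fun y => fderiv ℝ f y) x ![u, v] w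
      = iteratedFDeriv ℝ 2 (fun y => fderiv ℝ f y w) x ![u, v] := by
    have := (ContinuousLinearMap.apply ℝ ℝ w).iteratedFDeriv_comp_left
      (f := fun y => fderiv ℝ f y) (hc.contDiffAt (x := x)) (i := 2) le_rfl
    have h3 : ((ContinuousLinearMap.apply ℝ ℝ w) ∘ fun y => fderiv ℝ f y)
        = fun y => fderiv ℝ f y w := rfl
    rw [h3] at this
    rw [this]
    rfl
  rw [h2]
  exact iteratedFDeriv_two_apply' _ ((ContinuousLinearMap.apply ℝ ℝ w).contDiff.comp hc) x u v

end reduction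

noncomputable def sexp (a : ℝ) {n : ℕ} (w z : Fin n → ℝ) : ℝ := ∑ i, Real.exp (a * z i) * w i

noncomputable def dsexp (a : ℝ) {n : ℕ} (w z : Fin n → ℝ) : (Fin n → ℝ) →L[ℝ] ℝ :=
  ∑ i, w i • Real.exp (a * z i) • a •
    (ContinuousLinearMap.proj i : ((Fin n → ℝ)) →L[ℝ] ℝ)

lemma dsexp_apply (a : ℝ) {n : ℕ} (w z v : Fin n → ℝ) :
    dsexp a w z v = a * sexp a (fun i => w i * v i) z := by
  simp only [dsexp, sexp, ContinuousLinearMap.sum_apply, ContinuousLinearMap.smul_apply,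
    ContinuousLinearMap.proj_apply, smul_eq_mul, Finset.mul_sum]
  exact Finset.sum_congr rfl fun i _ => by ring

lemma hasFDerivAt_sexp (a : ℝ) {n : ℕ} (w z : Fin n → ℝ) :
    HasFDerivAt (sexp a w) (dsexp a w z) z := by
  unfold sexp dsexp
  apply HasFDerivAt.fun_sum
  intro i _
  have h0 := (ContinuousLinearMap.proj (R := ℝ) (φ := fun _ : Fin n => ℝ) i).hasFDerivAt (x := z)
  exact ((h0.const_mul a).exp).mul_const (w i)

lemma contDiff_sexp (a : ℝ) {n : ℕ} (w : Fin n → ℝ) {k : ℕ∞} : ContDiff ℝ k (sexp a w) := by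
  unfold sexp
  apply ContDiff.sum
  intro i _
  have hproj : ContDiff ℝ k (fun z : Fin n → ℝ => z i) :=
    (ContinuousLinearMap.proj i : ((Fin n → ℝ)) →L[ℝ] ℝ).contDiff
  exact (Real.contDiff_exp.comp (contDiff_const.mul hproj)).mul contDiff_const

lemma sexp_one_pos (a : ℝ) {n : ℕ} (hn : 0 < n) (z : Fin n → ℝ) :
    0 < sexp a (fun _ => 1) z := by
  have : Nonempty (Fin n) := Fin.pos_iff_nonempty.mp hn
  exact Finset.sum_pos (fun i _ => by positivity) Finset.univ_nonempty

lemma lse_eq (a : ℝ) {n : ℕ} :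
    lse a = fun z : Fin n → ℝ => Real.log (sexp a (fun _ => 1) z) := by
  funext z; simp [lse, sexp]

section derivs

variable {n : ℕ} {a : ℝ}

lemma contDiff_lse (hn : 0 < n) {k : ℕ∞} : ContDiff ℝ k (lse a (n := n)) := by
  rw [lse_eq]
  exact (contDiff_sexp a _).log fun z => (sexp_one_pos a hn z).ne'

lemma hasFDerivAt_lse (hn : 0 < n) (z : Fin n → ℝ) :
    HasFDerivAt (lse a)
      ((sexp a (fun _ => 1) z)⁻¹ • dsexp a (fun _ => 1) z) z := by
  rw [lse_eq]
  exact (hasFDerivAt_sexp a _ z).log (sexp_one_pos a hn z).ne'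

lemma fderiv_lse_apply (hn : 0 < n) (z w : Fin n → ℝ) :
    fderiv ℝ (lse a) z w
      = (sexp a (fun _ => 1) z)⁻¹ * (a * sexp a w z) := by
  rw [(hasFDerivAt_lse hn z).fderiv]
  simp only [ContinuousLinearMap.smul_apply, smul_eq_mul, dsexp_apply, one_mul]

lemma hasFDerivAt_g2 (hn : 0 < n) (w z : Fin n → ℝ) :
    HasFDerivAt (fun y => (sexp a (fun _ => 1) y)⁻¹ * (a * sexp a w y))
      ((sexp a (fun _ => 1) z)⁻¹ • (a • dsexp a w z)
        + (a * sexp a w z) • (-(sexp a (fun _ => 1) z ^ 2)⁻¹ • dsexp a (fun _ => 1) z)) z := by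
  have hS := hasFDerivAt_sexp a (fun _ => 1) z
  have hSne := (sexp_one_pos a hn z).ne'
  have hInv : HasFDerivAt (fun y => (sexp a (fun _ => 1) y)⁻¹)
      (-(sexp a (fun _ => 1) z ^ 2)⁻¹ • dsexp a (fun _ => 1) z) z :=
    (hasDerivAt_inv hSne).comp_hasFDerivAt z hS
  exact hInv.mul ((hasFDerivAt_sexp a w z).const_mul a)

lemma fderiv_g2_apply (hn : 0 < n) (w z v : Fin n → ℝ) :
    fderiv ℝ (fun y => (sexp a (fun _ => 1) y)⁻¹ * (a * sexp a w y)) z v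
      = (sexp a (fun _ => 1) z)⁻¹ * (a * (a * sexp a (fun i => w i * v i) z))
        + (a * sexp a w z) *
          (-(sexp a (fun _ => 1) z ^ 2)⁻¹ * (a * sexp a v z)) := by
  rw [(hasFDerivAt_g2 hn w z).fderiv]
  simp only [ContinuousLinearMap.add_apply, ContinuousLinearMap.smul_apply, smul_eq_mul,
    dsexp_apply, one_mul]

lemma fderiv_g3_apply (hn : 0 < n) (x u Δ : Fin n → ℝ) :
    fderiv ℝ (fun y => (sexp a (fun _ => 1) y)⁻¹ * (a * (a * sexp a (fun i => Δ i * u i) y))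
        + (a * sexp a Δ y) * (-(sexp a (fun _ => 1) y ^ 2)⁻¹ * (a * sexp a u y))) x u
      = a ^ 3 * (sexp a (fun i => Δ i * u i * u i) x / sexp a (fun _ => 1) x
          - 2 * sexp a (fun i => Δ i * u i) x * sexp a u x / sexp a (fun _ => 1) x ^ 2
          - sexp a Δ x * sexp a (fun i => u i * u i) x / sexp a (fun _ => 1) x ^ 2
          + 2 * sexp a Δ x * sexp a u x * sexp a u x / sexp a (fun _ => 1) x ^ 3) := by
  have hS := hasFDerivAt_sexp a (fun _ => 1) x
  have hSpos := sexp_one_pos a hn x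
  have hSne := hSpos.ne'
  have hInv : HasFDerivAt (fun y => (sexp a (fun _ => 1) y)⁻¹)
      (-(sexp a (fun _ => 1) x ^ 2)⁻¹ • dsexp a (fun _ => 1) x) x :=
    (hasDerivAt_inv hSne).comp_hasFDerivAt x hS
  have hNegInvSq : HasFDerivAt (fun y => -(sexp a (fun _ => 1) y ^ 2)⁻¹)
      ((-(-(2 * sexp a (fun _ => 1) x ^ 1) / (sexp a (fun _ => 1) x ^ 2) ^ 2))
        • dsexp a (fun _ => 1) x) x := by
    have h1 : HasDerivAt (fun t : ℝ => -(t ^ 2)⁻¹)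
        (-(-(2 * sexp a (fun _ => 1) x ^ 1) / (sexp a (fun _ => 1) x ^ 2) ^ 2))
        (sexp a (fun _ => 1) x) :=
      ((hasDerivAt_pow 2 (sexp a (fun _ => 1) x)).fun_inv (pow_ne_zero 2 hSne)).fun_neg.congr_deriv (by norm_num)
    exact h1.comp_hasFDerivAt x hS
  have H1 : HasFDerivAt
      (fun y => (sexp a (fun _ => 1) y)⁻¹ * (a * (a * sexp a (fun i => Δ i * u i) y)))
      _ x :=
    hInv.mul (((hasFDerivAt_sexp a (fun i => Δ i * u i) x).const_mul a).const_mul a)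
  have H2 : HasFDerivAt
      (fun y => (a * sexp a Δ y) * (-(sexp a (fun _ => 1) y ^ 2)⁻¹ * (a * sexp a u y)))
      _ x :=
    ((hasFDerivAt_sexp a Δ x).const_mul a).mul
      (hNegInvSq.mul ((hasFDerivAt_sexp a u x).const_mul a))
  rw [(H1.fun_add H2).fderiv]
  simp only [ContinuousLinearMap.add_apply, ContinuousLinearMap.smul_apply, smul_eq_mul,
    dsexp_apply, one_mul, pow_one]
  field_simp
  ring

end derivs

/-- The scaled log-sum-exp function is (2a,2)-generalized self-concordant with
    respect to the ℓ∞ norm: |∇³Ψ(x)[u,u,Δ]| ≤ 2a ‖Δ‖∞ (uᵀ∇²Ψ(x)u).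
    (For `Fin n → ℝ`, the norm `‖Δ‖` is the sup norm.) -/
theorem lse_self_concordant {n : ℕ} (a : ℝ) (ha : 0 < a)
    (x u Δ : Fin n → ℝ) :
    |iteratedFDeriv ℝ 3 (lse a) x ![u, u, Δ]|
      ≤ 2 * a * ‖Δ‖ * iteratedFDeriv ℝ 2 (lse a) x ![u, u] := by
  rcases Nat.eq_zero_or_pos n with hn | hn
  · subst hn
    have hconst : (lse a : (Fin 0 → ℝ) → ℝ) = fun _ => Real.log 0 := by
      funext z; simp [lse]
    rw [hconst, iteratedFDeriv_const_of_ne (by norm_num), iteratedFDeriv_const_of_ne (by norm_num)]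
    simp
  -- notation
  set S := sexp a (fun _ => 1) x with hSdef
  have hSpos : 0 < S := sexp_one_pos a hn x
  have hSne : S ≠ 0 := hSpos.ne'
  set M : ℝ := sexp a u x / S with hM
  set D : ℝ := sexp a Δ x / S with hD
  -- third derivative
  have e1 : (fun z => fderiv ℝ (lse a) z Δ)
      = fun z => (sexp a (fun _ => 1) z)⁻¹ * (a * sexp a Δ z) :=
    funext fun z => fderiv_lse_apply hn z Δ
  have e1' : (fun z => fderiv ℝ (lse a) z u)
      = fun z => (sexp a (fun _ => 1) z)⁻¹ * (a * sexp a u z) :=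
    funext fun z => fderiv_lse_apply hn z u
  have e2 : (fun y => fderiv ℝ
        (fun z => (sexp a (fun _ => 1) z)⁻¹ * (a * sexp a Δ z)) y u)
      = fun y => (sexp a (fun _ => 1) y)⁻¹ * (a * (a * sexp a (fun i => Δ i * u i) y))
          + (a * sexp a Δ y) * (-(sexp a (fun _ => 1) y ^ 2)⁻¹ * (a * sexp a u y)) :=
    funext fun y => fderiv_g2_apply hn Δ y u
  have h3 : iteratedFDeriv ℝ 3 (lse a) x ![u, u, Δ]
      = a ^ 3 * (sexp a (fun i => Δ i * u i * u i) x / S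
          - 2 * sexp a (fun i => Δ i * u i) x * sexp a u x / S ^ 2
          - sexp a Δ x * sexp a (fun i => u i * u i) x / S ^ 2
          + 2 * sexp a Δ x * sexp a u x * sexp a u x / S ^ 3) := by
    rw [iteratedFDeriv_three_apply (lse a) (contDiff_lse hn) x u u Δ, e1, e2]
    exact fderiv_g3_apply hn x u Δ
  -- second derivative
  have h2 : iteratedFDeriv ℝ 2 (lse a) x ![u, u]
      = (S)⁻¹ * (a * (a * sexp a (fun i => u i * u i) x))
        + (a * sexp a u x) * (-(S ^ 2)⁻¹ * (a * sexp a u x)) := by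
    rw [iteratedFDeriv_two_apply' (lse a) (contDiff_lse hn) x u u, e1']
    exact fderiv_g2_apply hn u x u
  -- centered sums
  set Q : ℝ := ∑ i, Real.exp (a * x i) * (u i - M) ^ 2 with hQdef
  set R : ℝ := ∑ i, Real.exp (a * x i) * ((u i - M) ^ 2 * (Δ i - D)) with hRdef
  have hQnn : 0 ≤ Q := Finset.sum_nonneg fun i _ => by positivity
  have hQ : Q = sexp a (fun i => u i * u i) x - 2 * M * sexp a u x + M ^ 2 * S := by
    rw [hQdef, hSdef]
    simp only [sexp, Finset.mul_sum, ← Finset.sum_sub_distrib, ← Finset.sum_add_distrib]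
    exact Finset.sum_congr rfl fun i _ => by ring
  have hR : R = sexp a (fun i => Δ i * u i * u i) x
      - D * sexp a (fun i => u i * u i) x
      - 2 * M * sexp a (fun i => Δ i * u i) x
      + 2 * M * D * sexp a u x
      + M ^ 2 * sexp a Δ x - M ^ 2 * D * S := by
    rw [hRdef, hSdef]
    simp only [sexp, Finset.mul_sum, ← Finset.sum_sub_distrib, ← Finset.sum_add_distrib]
    exact Finset.sum_congr rfl fun i _ => by ring
  -- express derivatives via centered sums
  have h2' : iteratedFDeriv ℝ 2 (lse a) x ![u, u] = a ^ 2 * Q / S := by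
    rw [h2, hQ, hM]
    field_simp
    ring
  have h3' : iteratedFDeriv ℝ 3 (lse a) x ![u, u, Δ] = a ^ 3 * R / S := by
    rw [h3, hR, hM, hD]
    field_simp
    ring
  -- bound |Δ i - D| ≤ 2 ‖Δ‖
  have hDi : ∀ i, |Δ i| ≤ ‖Δ‖ := fun i => by
    have := norm_le_pi_norm Δ i
    simpa [Real.norm_eq_abs] using this
  have hDbar : |D| ≤ ‖Δ‖ := by
    rw [hD, abs_div, abs_of_pos hSpos, div_le_iff₀ hSpos]
    calc |sexp a Δ x| ≤ ∑ i, |Real.exp (a * x i) * Δ i| := by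
          exact Finset.abs_sum_le_sum_abs _ _
      _ ≤ ∑ i, Real.exp (a * x i) * ‖Δ‖ := by
          apply Finset.sum_le_sum
          intro i _
          rw [abs_mul, abs_of_pos (Real.exp_pos _)]
          exact mul_le_mul_of_nonneg_left (hDi i) (Real.exp_pos _).le
      _ = ‖Δ‖ * S := by rw [hSdef]; simp [sexp, Finset.sum_mul, mul_comm]
  have hRbound : |R| ≤ 2 * ‖Δ‖ * Q := by
    calc |R| ≤ ∑ i, |Real.exp (a * x i) * ((u i - M) ^ 2 * (Δ i - D))| :=
          Finset.abs_sum_le_sum_abs _ _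
      _ ≤ ∑ i, Real.exp (a * x i) * (u i - M) ^ 2 * (2 * ‖Δ‖) := by
          apply Finset.sum_le_sum
          intro i _
          rw [abs_mul, abs_mul, abs_of_pos (Real.exp_pos _), abs_of_nonneg (sq_nonneg _),
            mul_assoc]
          apply mul_le_mul_of_nonneg_left _ (Real.exp_pos _).le
          apply mul_le_mul_of_nonneg_left _ (sq_nonneg _)
          calc |Δ i - D| ≤ |Δ i| + |D| := abs_sub _ _
            _ ≤ ‖Δ‖ + ‖Δ‖ := add_le_add (hDi i) hDbar
            _ = 2 * ‖Δ‖ := by ring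
      _ = 2 * ‖Δ‖ * Q := by rw [hQdef, ← Finset.sum_mul, mul_comm]
  -- final assembly
  rw [h3', h2', abs_div, abs_mul, abs_of_pos (pow_pos ha 3), abs_of_pos hSpos]
  have hrhs : 2 * a * ‖Δ‖ * (a ^ 2 * Q / S) = a ^ 3 * (2 * ‖Δ‖ * Q) / S := by ring
  rw [hrhs]
  gcongr
end

section
/- Let f_i : ℝ^{n+1} → ℝ be C³ functions, let G(z) = log(∑_{i=1}^n exp(f_i(z))), and let p_i(z) = exp(f_i(z))/∑_j exp(f_j(z)). Fix z and directions u, h ∈ ℝ^{n+1}. Define A_i = ∇f_i(z)[u], B_i = ∇²f_i(z)[u,u], C_i = ∇²f_i(z)[u,h], H_i = ∇f_i(z)[h], T_i = ∇³f_i(z)[u,u,h], and let I be a random index with P(I=i) = p_i(z). Then ∇²G(z)[u,u] = E[B_I] + Var(A_I) and ∇³G(z)[u,u,h] = E[T_I] + Cov(B_I,H_I) + 2·Cov(A_I,C_I) + Cov((A_I − E A_I)², H_I). -/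
/-!
Write `p(w) = softmax (f · w)`. Since `p i = exp (f i - G)`, its derivative is
`D p i = p i • (D f i - D G)` with `D G = E_p[D f]`, so differentiating a softmax moment
along `u` tilts it:
`D_u E_p[φ] = E_p[D_u φ] + Cov_p(A, φ)`, where `A = D_u f`.
Starting from `D_h G = E_p[H]`, one application gives `D²G[u,h] = E_p[C] + Cov_p(A, H)`,
and applying it once more, to `E_p[C]` and to `Cov_p(A, H) = E_p[AH] - E_p[A] E_p[H]`,
gives the third derivative. The remaining third-order term
`Cov(A, AH) - Var(A) E[H] - E[A] Cov(A, H)` is the central moment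
`E[(A - EA)² (H - EH)] = Cov((A - EA)², H)`, using that the weights sum to one.
-/

/-- Expectation of φ under finite weights p. -/
def finExp {n : ℕ} (p φ : Fin n → ℝ) : ℝ := ∑ i, p i * φ i

/-- Covariance of φ, ψ under finite weights p. -/
def finCov {n : ℕ} (p φ ψ : Fin n → ℝ) : ℝ :=
  finExp p (fun i => φ i * ψ i) - finExp p φ * finExp p ψ

/-- Variance of φ under finite weights p. -/
def finVar {n : ℕ} (p φ : Fin n → ℝ) : ℝ := finCov p φ φ

open Finset Real

section IteratedFDeriv

variable {𝕜 E F : Type*} [NontriviallyNormedField 𝕜] [NormedAddCommGroup E] [NormedSpace 𝕜 E]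
  [NormedAddCommGroup F] [NormedSpace 𝕜 F] {g : E → F}

theorem ContDiff.fderiv_apply_const {k : WithTop ℕ∞} (hg : ContDiff 𝕜 (k + 1) g) (v : E) :
    ContDiff 𝕜 k fun w => fderiv 𝕜 g w v :=
  (hg.fderiv_right le_rfl).clm_apply contDiff_const

theorem iteratedFDeriv_succ_apply_snoc {k : ℕ} (hg : ContDiff 𝕜 (k + 1) g) (z : E)
    (m : Fin k → E) (v : E) :
    iteratedFDeriv 𝕜 (k + 1) g z (Fin.snoc m v) =
      iteratedFDeriv 𝕜 k (fun w => fderiv 𝕜 g w v) z m := by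
  rw [iteratedFDeriv_succ_apply_right, Fin.init_snoc, Fin.snoc_last,
    show (fun w => fderiv 𝕜 g w v) = ContinuousLinearMap.apply 𝕜 F v ∘ fderiv 𝕜 g from rfl,
    (ContinuousLinearMap.apply 𝕜 F v).iteratedFDeriv_comp_left
      (hg.fderiv_right le_rfl).contDiffAt le_rfl]
  rfl

theorem iteratedFDeriv_two_apply_eq_fderiv (hg : ContDiff 𝕜 2 g) (z u v : E) :
    iteratedFDeriv 𝕜 2 g z ![u, v] = fderiv 𝕜 (fun w => fderiv 𝕜 g w v) z u := by
  have hsnoc : ![u, v] = Fin.snoc ![u] v := by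
    funext i; fin_cases i <;> rfl
  rw [hsnoc, iteratedFDeriv_succ_apply_snoc hg, iteratedFDeriv_one_apply]
  rfl

theorem iteratedFDeriv_three_apply_eq_fderiv (hg : ContDiff 𝕜 3 g) (z u u' v : E) :
    iteratedFDeriv 𝕜 3 g z ![u, u', v] =
      fderiv 𝕜 (fun w => fderiv 𝕜 (fun y => fderiv 𝕜 g y v) w u') z u := by
  have hsnoc : ![u, u', v] = Fin.snoc ![u, u'] v := by
    funext i; fin_cases i <;> rfl
  rw [hsnoc, iteratedFDeriv_succ_apply_snoc hg,
    iteratedFDeriv_two_apply_eq_fderiv (hg.fderiv_apply_const v)]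

end IteratedFDeriv

section Softmax

variable {ι : Type*} [Fintype ι]

noncomputable def softmax (x : ι → ℝ) (i : ι) : ℝ :=
  exp (x i) / ∑ j, exp (x j)

theorem sum_softmax [Nonempty ι] (x : ι → ℝ) : ∑ i, softmax x i = 1 := by
  simp only [softmax, ← Finset.sum_div]
  exact div_self (sum_pos (fun i _ => exp_pos _) univ_nonempty).ne'

theorem softmax_eq_exp_sub_log (x : ι → ℝ) (i : ι) :
    softmax x i = exp (x i - log (∑ j, exp (x j))) := by
  have hpos : 0 < ∑ j, exp (x j) := sum_pos (fun j _ => exp_pos _) ⟨i, mem_univ i⟩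
  simp only [softmax, exp_sub, exp_log hpos]

variable {E : Type*} [NormedAddCommGroup E] [NormedSpace ℝ E]
  {f : ι → E → ℝ} {f' : ι → E →L[ℝ] ℝ} {z : E}

theorem hasFDerivAt_log_sum_exp [Nonempty ι] (hf : ∀ i, HasFDerivAt (f i) (f' i) z) :
    HasFDerivAt (fun w => log (∑ i, exp (f i w)))
      (∑ i, softmax (fun j => f j z) i • f' i) z := by
  have hpos : 0 < ∑ i, exp (f i z) := sum_pos (fun i _ => exp_pos _) univ_nonempty
  convert (HasFDerivAt.fun_sum fun i _ => (hf i).exp).log hpos.ne' using 1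
  simp only [Finset.smul_sum, smul_smul, softmax, div_eq_inv_mul]

theorem hasFDerivAt_softmax (hf : ∀ i, HasFDerivAt (f i) (f' i) z) (i : ι) :
    HasFDerivAt (fun w => softmax (fun j => f j w) i)
      (softmax (fun j => f j z) i • (f' i - ∑ j, softmax (fun j => f j z) j • f' j)) z := by
  have : Nonempty ι := ⟨i⟩
  convert ((hf i).fun_sub (hasFDerivAt_log_sum_exp hf)).exp using 1
  · funext w
    exact softmax_eq_exp_sub_log (fun j => f j w) i
  · rw [softmax_eq_exp_sub_log (fun j => f j z) i]

end Softmax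

section FiniteWeights

variable {n : ℕ}

theorem finCov_eq_finExp_sub_mul (p a b : Fin n → ℝ) :
    finCov p a b = finExp p fun i => (a i - finExp p a) * b i := by
  simp only [finCov, finExp, mul_sum, ← sum_sub_distrib]
  exact sum_congr rfl fun i _ => by ring

theorem finCov_centered_sq {p : Fin n → ℝ} (hp : ∑ i, p i = 1) (a b : Fin n → ℝ) :
    finCov p (fun i => (a i - finExp p a) ^ 2) b =
      finCov p a (fun i => a i * b i) - finVar p a * finExp p b - finExp p a * finCov p a b := by
  have hsq_mul : ∀ c, finExp p (fun i => (a i - c) ^ 2 * b i) =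
      finExp p (fun i => a i * (a i * b i)) - 2 * c * finExp p (fun i => a i * b i)
        + c ^ 2 * finExp p b := fun c => by
    simp only [finExp, mul_sum, ← sum_sub_distrib, ← sum_add_distrib]
    exact sum_congr rfl fun i _ => by ring
  have hsq : ∀ c, finExp p (fun i => (a i - c) ^ 2) =
      finExp p (fun i => a i * a i) - 2 * c * finExp p a + c ^ 2 := fun c => by
    rw [← mul_one (c ^ 2), ← hp]
    simp only [finExp, mul_sum, ← sum_sub_distrib, ← sum_add_distrib]
    exact sum_congr rfl fun i _ => by ring
  simp only [finCov, finVar, hsq_mul, hsq]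
  ring

variable {E : Type*} [NormedAddCommGroup E] [NormedSpace ℝ E] {f φ ψ : Fin n → E → ℝ} {z : E}

theorem fderiv_log_sum_exp_apply [Nonempty (Fin n)] (hf : ∀ i, DifferentiableAt ℝ (f i) z)
    (u : E) :
    fderiv ℝ (fun w => log (∑ i, exp (f i w))) z u =
      finExp (softmax fun i => f i z) fun i => fderiv ℝ (f i) z u := by
  rw [(hasFDerivAt_log_sum_exp fun i => (hf i).hasFDerivAt).fderiv]
  simp only [finExp, _root_.sum_apply, smul_apply, smul_eq_mul]

theorem hasFDerivAt_finExp_softmax {f' φ' : Fin n → E →L[ℝ] ℝ}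
    (hf : ∀ i, HasFDerivAt (f i) (f' i) z) (hφ : ∀ i, HasFDerivAt (φ i) (φ' i) z) :
    HasFDerivAt (fun w => finExp (softmax fun i => f i w) fun i => φ i w)
      (∑ i, (softmax (fun j => f j z) i • φ' i + φ i z • softmax (fun j => f j z) i •
        (f' i - ∑ j, softmax (fun j => f j z) j • f' j))) z :=
  HasFDerivAt.fun_sum fun i _ => (hasFDerivAt_softmax hf i).mul (hφ i)

theorem DifferentiableAt.finExp_softmax (hf : ∀ i, DifferentiableAt ℝ (f i) z)
    (hφ : ∀ i, DifferentiableAt ℝ (φ i) z) :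
    DifferentiableAt ℝ (fun w => finExp (softmax fun i => f i w) fun i => φ i w) z :=
  (hasFDerivAt_finExp_softmax (fun i => (hf i).hasFDerivAt)
    (fun i => (hφ i).hasFDerivAt)).differentiableAt

theorem fderiv_finExp_softmax_apply (hf : ∀ i, DifferentiableAt ℝ (f i) z)
    (hφ : ∀ i, DifferentiableAt ℝ (φ i) z) (u : E) :
    fderiv ℝ (fun w => finExp (softmax fun i => f i w) fun i => φ i w) z u =
      finExp (softmax fun i => f i z) (fun i => fderiv ℝ (φ i) z u) +
        finCov (softmax fun i => f i z) (fun i => fderiv ℝ (f i) z u) fun i => φ i z := by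
  rw [(hasFDerivAt_finExp_softmax (fun i => (hf i).hasFDerivAt)
    (fun i => (hφ i).hasFDerivAt)).fderiv, finCov_eq_finExp_sub_mul]
  simp only [finExp, _root_.sum_apply, add_apply, smul_apply, sub_apply, smul_eq_mul,
    ← sum_add_distrib]
  exact sum_congr rfl fun i _ => by ring

theorem fderiv_fderiv_log_sum_exp_apply [Nonempty (Fin n)] (hf : ∀ i, ContDiff ℝ 2 (f i))
    (z u v : E) :
    fderiv ℝ (fun w => fderiv ℝ (fun y => log (∑ i, exp (f i y))) w v) z u =
      finExp (softmax fun i => f i z) (fun i => fderiv ℝ (fun y => fderiv ℝ (f i) y v) z u) +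
        finCov (softmax fun i => f i z) (fun i => fderiv ℝ (f i) z u)
          fun i => fderiv ℝ (f i) z v := by
  have hf1 i : Differentiable ℝ (f i) := (hf i).differentiable (by norm_num)
  rw [funext fun w => fderiv_log_sum_exp_apply (fun i => hf1 i w) v,
    fderiv_finExp_softmax_apply (fun i => hf1 i z)
      fun i => ((hf i).fderiv_apply_const (k := 1) v).differentiable (by norm_num) z]

theorem DifferentiableAt.finCov_softmax (hf : ∀ i, DifferentiableAt ℝ (f i) z)
    (hφ : ∀ i, DifferentiableAt ℝ (φ i) z) (hψ : ∀ i, DifferentiableAt ℝ (ψ i) z) :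
    DifferentiableAt ℝ
      (fun w => finCov (softmax fun i => f i w) (fun i => φ i w) fun i => ψ i w) z :=
  (DifferentiableAt.finExp_softmax hf fun i => (hφ i).fun_mul (hψ i)).fun_sub
    ((DifferentiableAt.finExp_softmax hf hφ).fun_mul (.finExp_softmax hf hψ))

theorem fderiv_finCov_softmax_apply (hf : ∀ i, DifferentiableAt ℝ (f i) z)
    (hφ : ∀ i, DifferentiableAt ℝ (φ i) z) (hψ : ∀ i, DifferentiableAt ℝ (ψ i) z) (u : E) :
    let p := softmax fun i => f i z
    let A := fun i => fderiv ℝ (f i) z u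
    fderiv ℝ (fun w => finCov (softmax fun i => f i w) (fun i => φ i w) fun i => ψ i w) z u =
      finCov p (fun i => fderiv ℝ (φ i) z u) (fun i => ψ i z) +
        finCov p (fun i => φ i z) (fun i => fderiv ℝ (ψ i) z u) +
        (finCov p A (fun i => φ i z * ψ i z)
          - finCov p A (fun i => φ i z) * finExp p (fun i => ψ i z)
          - finExp p (fun i => φ i z) * finCov p A fun i => ψ i z) := by
  intro p A
  have hprod : ∀ i, fderiv ℝ (fun w => φ i w * ψ i w) z u =
      fderiv ℝ (φ i) z u * ψ i z + φ i z * fderiv ℝ (ψ i) z u := fun i => by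
    rw [fderiv_fun_mul (hφ i) (hψ i)]
    simp only [add_apply, smul_apply, smul_eq_mul]
    ring
  simp only [finCov]
  rw [fderiv_fun_sub (.finExp_softmax hf fun i => (hφ i).fun_mul (hψ i))
      ((DifferentiableAt.finExp_softmax hf hφ).fun_mul (.finExp_softmax hf hψ)),
    fderiv_fun_mul (.finExp_softmax hf hφ) (.finExp_softmax hf hψ)]
  simp only [sub_apply, add_apply, smul_apply, smul_eq_mul,
    fderiv_finExp_softmax_apply hf (fun i => (hφ i).fun_mul (hψ i)),
    fderiv_finExp_softmax_apply hf hφ, fderiv_finExp_softmax_apply hf hψ, hprod]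
  simp only [finCov, finExp, mul_add, sum_add_distrib]
  ring

end FiniteWeights

/-- Cumulant identities for the log-partition function G = log ∑ᵢ exp(fᵢ):
    the second and third directional derivatives of G in directions u, u, h are
    expressed via expectations/variances/covariances under the softmax weights. -/
theorem logsumexp_cumulant_identities {n : ℕ} (hn : 0 < n)
    (f : Fin n → (Fin (n + 1) → ℝ) → ℝ) (hf : ∀ i, ContDiff ℝ 3 (f i))
    (z u h : Fin (n + 1) → ℝ) :
    let G : (Fin (n + 1) → ℝ) → ℝ := fun w => Real.log (∑ i, Real.exp (f i w))
    let p : Fin n → ℝ := fun i => Real.exp (f i z) / ∑ j, Real.exp (f j z)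
    let A : Fin n → ℝ := fun i => fderiv ℝ (f i) z u
    let B : Fin n → ℝ := fun i => iteratedFDeriv ℝ 2 (f i) z ![u, u]
    let Cm : Fin n → ℝ := fun i => iteratedFDeriv ℝ 2 (f i) z ![u, h]
    let H : Fin n → ℝ := fun i => fderiv ℝ (f i) z h
    let T : Fin n → ℝ := fun i => iteratedFDeriv ℝ 3 (f i) z ![u, u, h]
    iteratedFDeriv ℝ 2 G z ![u, u] = finExp p B + finVar p A ∧
    iteratedFDeriv ℝ 3 G z ![u, u, h]
      = finExp p T + finCov p B H + 2 * finCov p A Cm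
        + finCov p (fun i => (A i - finExp p A) ^ 2) H := by
  intro G p A B Cm H T
  have : Nonempty (Fin n) := ⟨⟨0, hn⟩⟩
  have hf2 i : ContDiff ℝ 2 (f i) := (hf i).of_le (by norm_num)
  have hG : ContDiff ℝ 3 G := (ContDiff.sum fun i _ => contDiff_exp.comp (hf i)).log
    fun w => (sum_pos (fun i _ => exp_pos (f i w)) univ_nonempty).ne'
  have hdf i := (hf i).differentiable (by norm_num) z
  have hdA i := ((hf i).fderiv_apply_const (k := 2) u).differentiable (by norm_num) z
  have hdH i := ((hf i).fderiv_apply_const (k := 2) h).differentiable (by norm_num) z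
  have hdC i :=
    (((hf i).fderiv_apply_const (k := 2) h).fderiv_apply_const (k := 1) u).differentiable
      (by norm_num) z
  have hp : p = softmax fun i => f i z := rfl
  simp only [B, Cm, T, iteratedFDeriv_two_apply_eq_fderiv (hf2 _),
    iteratedFDeriv_three_apply_eq_fderiv (hf _)]
  refine ⟨?_, ?_⟩
  · rw [iteratedFDeriv_two_apply_eq_fderiv (hG.of_le (by norm_num)),
      fderiv_fderiv_log_sum_exp_apply hf2, hp]
    rfl
  · rw [iteratedFDeriv_three_apply_eq_fderiv hG,
      funext fun w => fderiv_fderiv_log_sum_exp_apply hf2 w u h,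
      fderiv_fun_add (.finExp_softmax hdf hdC) (.finCov_softmax hdf hdA hdH), add_apply,
      fderiv_finExp_softmax_apply hdf hdC, fderiv_finCov_softmax_apply hdf hdA hdH,
      hp, finCov_centered_sq (sum_softmax _)]
    simp only [A, H, finVar]
    ring
end

section
/- Let Δt_1, …, Δt_T ≥ 0 with Δt_j ≤ M for all j, let t_0 > 0, and set t_j = t_0 + ∑_{i=1}^j Δt_i. Then ∑_{j=1}^T Δt_j/√(t_{j-1}) ≤ 2·√(1 + M/t_0)·(√(t_T) − √(t_0)). -/
lemma key_step (t0 M a d : ℝ) (ht0 : 0 < t0) (hM : 0 < M) (ha : t0 ≤ a)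
    (hd : 0 ≤ d) (hdM : d ≤ M) :
    d / Real.sqrt a ≤ 2 * Real.sqrt (1 + M / t0) * (Real.sqrt (a + d) - Real.sqrt a) := by
  have ha0 : 0 < a := lt_of_lt_of_le ht0 ha
  set x := Real.sqrt a with hx
  set y := Real.sqrt (a + d) with hy
  set C := Real.sqrt (1 + M / t0) with hC
  have hx0 : 0 < x := Real.sqrt_pos.mpr ha0
  have hxy : x ≤ y := Real.sqrt_le_sqrt (by linarith)
  have hx2 : x ^ 2 = a := Real.sq_sqrt ha0.le
  have hy2 : y ^ 2 = a + d := Real.sq_sqrt (by linarith)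
  have hC1 : 1 ≤ C := by
    rw [hC]
    have : (1:ℝ) = Real.sqrt 1 := (Real.sqrt_one).symm
    rw [this]
    exact Real.sqrt_le_sqrt (by have := div_nonneg hM.le ht0.le; linarith)
  have hyCx : y ≤ C * x := by
    rw [hy, hC, hx, ← Real.sqrt_mul (by positivity)]
    apply Real.sqrt_le_sqrt
    have h1 : d ≤ a * M / t0 := by
      calc d ≤ M := hdM
        _ ≤ a * M / t0 := by
            rw [le_div_iff₀ ht0]
            nlinarith
    have : (1 + M / t0) * a = a + a * M / t0 := by field_simp
    rw [this]; linarith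
  rw [div_le_iff₀ hx0]
  have hd' : d = (y - x) * (y + x) := by nlinarith
  nlinarith [mul_nonneg (sub_nonneg.mpr hxy) (sub_nonneg.mpr (by nlinarith : y + x ≤ 2 * C * x))]

/-- Shifted self-normalizing series bound: if 0 ≤ Δtⱼ ≤ M and
    tⱼ = t₀ + ∑_{i<j} Δtᵢ, then
    ∑ⱼ Δtⱼ/√(t_{j-1}) ≤ 2 √(1 + M/t₀) (√(t_T) − √(t₀)). -/
theorem self_normalizing_series_bound (T : ℕ) (Δ : ℕ → ℝ) (t0 M : ℝ)
    (ht0 : 0 < t0) (hM : 0 < M) (hΔ : ∀ j < T, 0 ≤ Δ j ∧ Δ j ≤ M) :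
    ∑ j ∈ Finset.range T, Δ j / Real.sqrt (t0 + ∑ i ∈ Finset.range j, Δ i)
      ≤ 2 * Real.sqrt (1 + M / t0)
        * (Real.sqrt (t0 + ∑ i ∈ Finset.range T, Δ i) - Real.sqrt t0) := by
  induction T with
  | zero => simp
  | succ n ih =>
    have hn : ∀ j < n, 0 ≤ Δ j ∧ Δ j ≤ M := fun j hj => hΔ j (Nat.lt_succ_of_lt hj)
    have hsum0 : 0 ≤ ∑ i ∈ Finset.range n, Δ i :=
      Finset.sum_nonneg fun i hi => (hn i (Finset.mem_range.mp hi)).1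
    have hΔn := hΔ n (Nat.lt_succ_self n)
    rw [Finset.sum_range_succ, Finset.sum_range_succ (f := Δ)]
    have h2 := key_step t0 M (t0 + ∑ i ∈ Finset.range n, Δ i) (Δ n) ht0 hM
      (by linarith) hΔn.1 hΔn.2
    have h1 := ih hn
    calc _ ≤ 2 * Real.sqrt (1 + M / t0)
          * (Real.sqrt (t0 + ∑ i ∈ Finset.range n, Δ i) - Real.sqrt t0)
          + Δ n / Real.sqrt (t0 + ∑ i ∈ Finset.range n, Δ i) := by linarith
      _ ≤ _ := by
          have hA : 2 * Real.sqrt (1 + M / t0)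
              * (Real.sqrt (t0 + (∑ i ∈ Finset.range n, Δ i + Δ n)) - Real.sqrt t0)
            = 2 * Real.sqrt (1 + M / t0)
              * (Real.sqrt (t0 + (∑ i ∈ Finset.range n, Δ i + Δ n))
                 - Real.sqrt (t0 + ∑ i ∈ Finset.range n, Δ i))
            + 2 * Real.sqrt (1 + M / t0)
              * (Real.sqrt (t0 + ∑ i ∈ Finset.range n, Δ i) - Real.sqrt t0) := by ring
          rw [← add_assoc] at hA ⊢
          linarith
end

section
/- Let Φ denote the standard normal CDF and let ε₀ = e^{−23}. For all ζ ∈ (0, ε₀], Φ^{-1}(1 − ζ) ≥ √(2·ln(1/ζ)) − √2, and also Φ^{-1}(1 − ζ) ≥ √(ln(1/ζ)). -/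
open MeasureTheory Real Set

/-- The standard normal cumulative distribution function. -/
noncomputable def stdNormalCDF (x : ℝ) : ℝ :=
  ∫ s in Set.Iic x, Real.exp (-s ^ 2 / 2) / Real.sqrt (2 * Real.pi)

lemma aux_g_integrable :
    Integrable (fun s : ℝ => Real.exp (-s ^ 2 / 2) / Real.sqrt (2 * Real.pi)) := by
  have h : Integrable (fun s : ℝ => Real.exp (-(1/2) * s ^ 2)) :=
    integrable_exp_neg_mul_sq (by norm_num)
  have := h.div_const (Real.sqrt (2 * Real.pi))
  convert this using 2 with s
  ring_nf

lemma aux_g_total :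
    (∫ s : ℝ, Real.exp (-s ^ 2 / 2) / Real.sqrt (2 * Real.pi)) = 1 := by
  have h := integral_gaussian (1/2 : ℝ)
  have h2 : (∫ s : ℝ, Real.exp (-s ^ 2 / 2)) = Real.sqrt (2 * Real.pi) := by
    rw [show Real.sqrt (2 * Real.pi) = Real.sqrt (Real.pi / (1/2)) by norm_num [mul_comm]]
    rw [← h]
    congr 1 with s
    ring_nf
  rw [integral_div, h2, div_self (Real.sqrt_ne_zero'.mpr (by positivity))]

lemma aux_cdf_le_one (x : ℝ) : stdNormalCDF x ≤ 1 := by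
  rw [← aux_g_total, stdNormalCDF]
  exact setIntegral_le_integral aux_g_integrable
    (Filter.Eventually.of_forall fun s => by positivity)

lemma aux_cdf_strictMono : StrictMono stdNormalCDF := by
  intro a b hab
  have h : stdNormalCDF b - stdNormalCDF a
      = ∫ s in a..b, Real.exp (-s ^ 2 / 2) / Real.sqrt (2 * Real.pi) :=
    intervalIntegral.integral_Iic_sub_Iic aux_g_integrable.integrableOn aux_g_integrable.integrableOn
  have hpos : 0 < ∫ s in a..b, Real.exp (-s ^ 2 / 2) / Real.sqrt (2 * Real.pi) := by
    apply intervalIntegral.intervalIntegral_pos_of_pos_on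
      aux_g_integrable.intervalIntegrable
    · intro s _; positivity
    · exact hab
  linarith [h ▸ hpos]

/-- Key: if `(b+1)^2/2 ≤ L - 1` with `L = log (1/ζ)`, `b ≥ 0`, then Φ(b) ≤ 1 - ζ. -/
lemma aux_key (ζ b : ℝ) (hζ0 : 0 < ζ) (hb : 0 ≤ b)
    (hkey : (b + 1) ^ 2 / 2 ≤ Real.log (1 / ζ) - 1) :
    stdNormalCDF b ≤ 1 - ζ := by
  set L := Real.log (1 / ζ) with hL
  have hζL : ζ = Real.exp (-L) := by
    rw [hL, Real.log_div one_ne_zero (ne_of_gt hζ0), Real.log_one, zero_sub, neg_neg,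
      Real.exp_log hζ0]
  -- rectangle lower bound for the integral from b to b+1
  have hrect : ζ ≤ ∫ s in b..(b+1), Real.exp (-s ^ 2 / 2) / Real.sqrt (2 * Real.pi) := by
    have hconst : ζ = ∫ _ in b..(b+1), ζ := by
      simp
    rw [hconst]
    apply intervalIntegral.integral_mono_on (by linarith)
      (intervalIntegrable_const) aux_g_integrable.intervalIntegrable
    intro x hx
    have hx0 : 0 ≤ x := le_trans hb hx.1
    have hx2 : x ^ 2 ≤ (b + 1) ^ 2 := by nlinarith [hx.2]
    have h1 : Real.exp (-(b+1) ^ 2 / 2) ≤ Real.exp (-x ^ 2 / 2) := by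
      apply Real.exp_le_exp.mpr; linarith
    have h2 : ζ * Real.sqrt (2 * Real.pi) ≤ Real.exp (-(b+1) ^ 2 / 2) := by
      rw [hζL, ← Real.exp_log (show (0:ℝ) < Real.sqrt (2 * Real.pi) by positivity),
        ← Real.exp_add, Real.exp_le_exp]
      have hsq : Real.sqrt (2 * Real.pi) ≤ Real.exp 1 := by
        have h27 : Real.sqrt (2 * Real.pi) ≤ 2.7 := by
          rw [show (2.7:ℝ) = Real.sqrt (2.7 ^ 2) from (Real.sqrt_sq (by norm_num)).symm]
          apply Real.sqrt_le_sqrt; nlinarith [Real.pi_lt_d2]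
        linarith [Real.exp_one_gt_d9]
      have hlog : Real.log (Real.sqrt (2 * Real.pi)) ≤ 1 := by
        calc Real.log (Real.sqrt (2 * Real.pi)) ≤ Real.log (Real.exp 1) :=
          Real.log_le_log (by positivity) hsq
        _ = 1 := Real.log_exp 1
      linarith
    have hsqrt : 0 < Real.sqrt (2 * Real.pi) := by positivity
    rw [le_div_iff₀ hsqrt]
    linarith
  -- Φ(b) + ζ ≤ Φ(b+1) ≤ 1
  have h : stdNormalCDF (b+1) - stdNormalCDF b
      = ∫ s in b..(b+1), Real.exp (-s ^ 2 / 2) / Real.sqrt (2 * Real.pi) :=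
    intervalIntegral.integral_Iic_sub_Iic aux_g_integrable.integrableOn aux_g_integrable.integrableOn
  have := aux_cdf_le_one (b+1)
  linarith

/-- Lower bounds on the standard normal quantile Φ⁻¹(1 − ζ) for ζ ∈ (0, e^{−23}]:
    Φ⁻¹(1−ζ) ≥ √(2 ln(1/ζ)) − √2 and Φ⁻¹(1−ζ) ≥ √(ln(1/ζ)).
    (The quantile is expressed as the y with Φ(y) = 1 − ζ.) -/
theorem gaussian_quantile_lower_bound (ζ : ℝ) (hζ0 : 0 < ζ)
    (hζ : ζ ≤ Real.exp (-23)) (y : ℝ) (hy : stdNormalCDF y = 1 - ζ) :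
    Real.sqrt (2 * Real.log (1 / ζ)) - Real.sqrt 2 ≤ y ∧
    Real.sqrt (Real.log (1 / ζ)) ≤ y := by
  set L := Real.log (1 / ζ) with hL
  have hL23 : (23:ℝ) ≤ L := by
    rw [hL, Real.log_div one_ne_zero (ne_of_gt hζ0), Real.log_one, zero_sub, le_neg]
    calc Real.log ζ ≤ Real.log (Real.exp (-23)) := Real.log_le_log hζ0 hζ
    _ = -23 := Real.log_exp _
  have hmono : ∀ b : ℝ, 0 ≤ b → (b + 1) ^ 2 / 2 ≤ L - 1 → b ≤ y := by
    intro b hb hkey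
    by_contra hyb
    push_neg at hyb
    have := aux_cdf_strictMono hyb
    have := aux_key ζ b hζ0 hb hkey
    linarith
  constructor
  · -- b₁ = √(2L) - √2
    have hs2 : Real.sqrt 2 ≤ 1.42 := by
      rw [show (1.42:ℝ) = Real.sqrt (1.42^2) from (Real.sqrt_sq (by norm_num)).symm]
      apply Real.sqrt_le_sqrt; norm_num
    have hs2' : (1.41:ℝ) ≤ Real.sqrt 2 := by
      rw [show (1.41:ℝ) = Real.sqrt (1.41^2) from (Real.sqrt_sq (by norm_num)).symm]
      apply Real.sqrt_le_sqrt; norm_num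
    have hu : (6.7:ℝ) ≤ Real.sqrt (2 * L) := by
      rw [show (6.7:ℝ) = Real.sqrt (6.7^2) from (Real.sqrt_sq (by norm_num)).symm]
      apply Real.sqrt_le_sqrt; nlinarith
    have husq : Real.sqrt (2 * L) ^ 2 = 2 * L := Real.sq_sqrt (by linarith)
    have := hmono (Real.sqrt (2 * L) - Real.sqrt 2) (by linarith)
      (by nlinarith [husq])
    linarith
  · -- b₂ = √L
    have hLs : Real.sqrt L ^ 2 = L := Real.sq_sqrt (by linarith)
    have hL4 : Real.sqrt L ≤ L / 4 := by
      nlinarith [Real.sqrt_nonneg L, hLs]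
    apply hmono _ (Real.sqrt_nonneg L)
    nlinarith [hLs]
end

section
/- Let φ denote the standard normal density and Φ the standard normal CDF. Then for all x ∈ (0, 1/2], x·√((1/2)·log(1/x)) ≤ φ(Φ^{-1}(x)). -/
set_option maxHeartbeats 1000000
open Real MeasureTheory Set Filter Topology

lemma g_int : Integrable (fun s : ℝ => Real.exp (-s^2/2)) := by
  have := integrable_exp_neg_mul_sq (by norm_num : (0:ℝ) < 1/2)
  convert this using 2 with s
  ring_nf

lemma g_total : ∫ s : ℝ, Real.exp (-s^2/2) = Real.sqrt (2*Real.pi) := by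
  have := integral_gaussian (1/2)
  rw [show Real.sqrt (π / (1/2)) = Real.sqrt (2*π) by norm_num [mul_comm]] at this
  rw [← this]
  congr 1 with s
  ring_nf

lemma g_half : ∫ s in Set.Iic (0:ℝ), Real.exp (-s^2/2) = Real.sqrt (2*Real.pi) / 2 := by
  have hsym : ∫ s in Set.Iic (0:ℝ), Real.exp (-s^2/2) = ∫ s in Set.Ioi (0:ℝ), Real.exp (-s^2/2) := by
    have := integral_comp_neg_Iic (0:ℝ) (fun s => Real.exp (-s^2/2))
    simpa [neg_sq] using this
  have hadd := intervalIntegral.integral_Iic_add_Ioi (μ := volume) (b := (0:ℝ))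
    g_int.integrableOn g_int.integrableOn
  rw [g_total] at hadd
  linarith [hsym, hadd]

lemma g_anti_int (y : ℝ) : IntegrableOn (fun s : ℝ => (-s) * Real.exp (-s^2/2)) (Set.Iic y) := by
  have := (integrable_mul_exp_neg_mul_sq (by norm_num : (0:ℝ) < 1/2)).neg
  refine Integrable.integrableOn ?_
  have heq : (fun s : ℝ => (-s) * Real.exp (-s^2/2)) = -(fun x : ℝ => x * Real.exp (-(1/2) * x^2)) := by
    funext s; simp; left; ring_nf
  rw [heq]; exact this

lemma g_anti (y : ℝ) : ∫ s in Set.Iic y, (-s) * Real.exp (-s^2/2) = Real.exp (-y^2/2) := by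
  have hderiv : ∀ s ∈ Set.Iic y, HasDerivAt (fun t : ℝ => Real.exp (-t^2/2))
      ((-s) * Real.exp (-s^2/2)) s := by
    intro s _
    have h1 : HasDerivAt (fun t : ℝ => -t^2/2) (-s) s := by
      have := ((hasDerivAt_pow 2 s).div_const 2).neg
      convert this using 1
      · rfl
      · rfl
      · funext t; simp only [Pi.neg_apply]; ring
      · norm_num
    simpa [mul_comm] using h1.exp
  have htend : Tendsto (fun t : ℝ => Real.exp (-t^2/2)) atBot (𝓝 0) := by
    apply Real.tendsto_exp_atBot.comp
    apply tendsto_atBot_mono' _ _ tendsto_id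
    filter_upwards [eventually_le_atBot (-2:ℝ)] with t ht
    simp only [id]
    nlinarith [sq_nonneg (t+2)]
  have := MeasureTheory.integral_Iic_of_hasDerivAt_of_tendsto' hderiv (g_anti_int y) htend
  simpa using this

lemma mills {y : ℝ} (hy : y < 0) :
    ∫ s in Set.Iic y, Real.exp (-s^2/2) ≤ Real.exp (-y^2/2) / (-y) := by
  have hmono : ∫ s in Set.Iic y, Real.exp (-s^2/2)
      ≤ ∫ s in Set.Iic y, (1/(-y)) * ((-s) * Real.exp (-s^2/2)) := by
    apply setIntegral_mono_on g_int.integrableOn ((g_anti_int y).const_mul _) measurableSet_Iic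
    intro s hs
    have hsy : s ≤ y := hs
    have h1 : (1:ℝ) ≤ (1/(-y)) * (-s) := by
      rw [div_mul_eq_mul_div, one_mul, le_div_iff₀ (by linarith)]
      linarith
    nlinarith [Real.exp_pos (-s^2/2)]
  rw [integral_const_mul, g_anti] at hmono
  calc ∫ s in Set.Iic y, Real.exp (-s^2/2) ≤ 1/(-y) * Real.exp (-y^2/2) := hmono
    _ = Real.exp (-y^2/2) / (-y) := by ring

lemma cdf_eq (y : ℝ) :
    stdNormalCDF y = (∫ s in Set.Iic y, Real.exp (-s^2/2)) / Real.sqrt (2*Real.pi) := by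
  unfold stdNormalCDF
  rw [integral_div]

lemma sq_log_mono {u v : ℝ} (hu : 0 < u) (huv : u ≤ v) (hv : 1/2 ≤ Real.log (1/v)) :
    u^2 * Real.log (1/u) ≤ v^2 * Real.log (1/v) := by
  have hv0 : 0 < v := lt_of_lt_of_le hu huv
  have hsplit : Real.log (1/u) = Real.log (v/u) + Real.log (1/v) := by
    rw [← Real.log_mul (by positivity) (by positivity)]
    congr 1
    field_simp
  have hlog : Real.log (v/u) ≤ v/u - 1 := Real.log_le_sub_one_of_pos (by positivity)
  have h0 : u^2 * Real.log (1/u) = u^2 * Real.log (v/u) + u^2 * Real.log (1/v) := by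
    rw [hsplit]; ring
  have h1 : u^2 * Real.log (v/u) ≤ u*(v-u) := by
    have h := mul_le_mul_of_nonneg_left hlog (sq_nonneg u)
    have : u^2 * (v/u - 1) = u*(v-u) := by field_simp
    linarith [this ▸ h]
  have h2 : (v^2-u^2) * (1/2) ≤ (v^2-u^2) * Real.log (1/v) :=
    mul_le_mul_of_nonneg_left hv (by nlinarith)
  nlinarith [sq_nonneg (v-u)]

lemma y_le (x y : ℝ) (hx : x ≤ 1/2) (hy : stdNormalCDF y = x) : y ≤ 2/3 := by
  by_contra h
  push_neg at h
  have hsqpi : (0:ℝ) < Real.sqrt (2*π) := Real.sqrt_pos.mpr (by positivity)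
  have hsub := intervalIntegral.integral_Iic_sub_Iic (μ := volume) (f := fun s : ℝ => Real.exp (-s^2/2))
    (a := (0:ℝ)) (b := y) g_int.integrableOn g_int.integrableOn
  have hpos : 0 < ∫ s in (0:ℝ)..y, Real.exp (-s^2/2) := by
    apply intervalIntegral.intervalIntegral_pos_of_pos_on
    · exact g_int.intervalIntegrable
    · intro s _
      exact Real.exp_pos _
    · linarith
  have hI : Real.sqrt (2*π)/2 < ∫ s in Set.Iic y, Real.exp (-s^2/2) := by
    rw [← g_half]; linarith
  have hxeq : x = (∫ s in Set.Iic y, Real.exp (-s^2/2)) / Real.sqrt (2*π) := by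
    rw [← hy, cdf_eq]
  rw [hxeq] at hx
  rw [div_le_iff₀ hsqpi] at hx
  nlinarith

/-- For x ∈ (0, 1/2], x √((1/2) log(1/x)) ≤ φ(Φ⁻¹(x)), where φ is the standard
    normal density (Φ⁻¹(x) is expressed as the y with Φ(y) = x). -/
theorem mills_type_bound (x : ℝ) (hx0 : 0 < x) (hx : x ≤ 1 / 2)
    (y : ℝ) (hy : stdNormalCDF y = x) :
    x * Real.sqrt ((1 / 2) * Real.log (1 / x))
      ≤ Real.exp (-y ^ 2 / 2) / Real.sqrt (2 * Real.pi) := by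
  have hpi : (3.14:ℝ) < π := Real.pi_gt_d2
  have hpi' : π < 3.15 := Real.pi_lt_d2
  have hsqpi : (0:ℝ) < Real.sqrt (2*π) := Real.sqrt_pos.mpr (by positivity)
  have hylt : y ≤ 2/3 := y_le x y hx hy
  -- rewrite both sides as sqrt
  rw [show x * Real.sqrt ((1/2) * Real.log (1/x))
      = Real.sqrt (x^2 * ((1/2) * Real.log (1/x))) by
    rw [Real.sqrt_mul (sq_nonneg x), Real.sqrt_sq hx0.le]]
  rw [show Real.exp (-y^2/2) / Real.sqrt (2*π) = Real.sqrt (Real.exp (-y^2) / (2*π)) by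
    rw [Real.sqrt_div (Real.exp_pos _).le, ← Real.exp_half]]
  apply Real.sqrt_le_sqrt
  have hlog2 : Real.log (1/(1/2):ℝ) = Real.log 2 := by norm_num
  have hl2lb : (0.6931471803:ℝ) < Real.log 2 := Real.log_two_gt_d9
  have hl2ub : Real.log 2 < 0.6931471808 := Real.log_two_lt_d9
  rcases le_or_gt (-2/3) y with hyc | hyc
  · -- Case A : |y| ≤ 2/3
    have hy2 : y^2 ≤ 4/9 := by nlinarith
    have hmono : x^2 * Real.log (1/x) ≤ (1/2)^2 * Real.log (1/(1/2)) := by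
      apply sq_log_mono hx0 hx
      rw [hlog2]; linarith
    have hexp : (5:ℝ)/9 ≤ Real.exp (-y^2) := by
      have h1 : Real.exp (-(4/9):ℝ) ≤ Real.exp (-y^2) := Real.exp_le_exp.mpr (by linarith)
      have h2 := Real.add_one_le_exp (-(4/9):ℝ)
      linarith
    rw [hlog2] at hmono
    have hfin : x^2 * ((1/2) * Real.log (1/x)) ≤ Real.log 2 / 8 := by nlinarith
    have hnum : Real.log 2 / 8 ≤ (5/9) / (2*π) := by
      rw [div_le_div_iff₀ (by norm_num) (by positivity)]
      nlinarith
    have hlast : (5/9:ℝ) / (2*π) ≤ Real.exp (-y^2) / (2*π) :=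
      (div_le_div_iff_of_pos_right (by positivity)).mpr hexp
    linarith
  · -- Case B : y ≤ -2/3
    have hmy : (2:ℝ)/3 ≤ -y := by linarith
    have hy0 : y < 0 := by linarith
    set v := Real.exp (-y^2/2) / ((-y) * Real.sqrt (2*π)) with hv_def
    have hv0 : 0 < v := by
      apply div_pos (Real.exp_pos _)
      positivity
    have hM : x ≤ v := by
      have h1 := mills hy0
      have hxeq : x = (∫ s in Set.Iic y, Real.exp (-s^2/2)) / Real.sqrt (2*π) := by
        rw [← hy, cdf_eq]
      rw [hxeq, hv_def, ← div_div]
      exact (div_le_div_iff_of_pos_right hsqpi).mpr h1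
    have hs26 : Real.sqrt (2*π) ≤ 2.6 := by
      have h1 : Real.sqrt (2*π) ≤ Real.sqrt (6.76) := Real.sqrt_le_sqrt (by nlinarith)
      rwa [show (6.76:ℝ) = 2.6^2 by norm_num, Real.sqrt_sq (by norm_num)] at h1
    have hs25 : (2.5:ℝ) ≤ Real.sqrt (2*π) := by
      have h1 : Real.sqrt (6.25) ≤ Real.sqrt (2*π) := Real.sqrt_le_sqrt (by nlinarith)
      rwa [show (6.25:ℝ) = 2.5^2 by norm_num, Real.sqrt_sq (by norm_num)] at h1
    -- key global inequality
    have hG : Real.sqrt (2*π) * (-y) ≤ Real.exp (3*y^2/2) := by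
      have step1 : Real.sqrt (2*π) * (-y) ≤ ((-y) + 2/3)^2 := by
        nlinarith [sq_nonneg ((-y) - 19/30)]
      have step2 : ((-y) + 2/3)^2 ≤ Real.exp (2*(-y) - 2/3) := by
        have h1 : (-y) + 2/3 ≤ Real.exp ((-y) - 1/3) := by
          have := Real.add_one_le_exp ((-y) - 1/3)
          linarith
        have h2 : ((-y) + 2/3)^2 ≤ Real.exp ((-y) - 1/3)^2 :=
          pow_le_pow_left₀ (by linarith) h1 2
        have h3 : Real.exp ((-y) - 1/3)^2 = Real.exp (2*(-y) - 2/3) := by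
          rw [sq, ← Real.exp_add]; ring_nf
        linarith [h3 ▸ h2]
      have step3 : Real.exp (2*(-y) - 2/3) ≤ Real.exp (3*y^2/2) := by
        apply Real.exp_le_exp.mpr
        nlinarith [sq_nonneg (y + 2/3)]
      linarith
    have hlogv : Real.log (1/v) ≤ 2*y^2 := by
      have hvexp : Real.exp (-(2*y^2)) ≤ v := by
        rw [hv_def, le_div_iff₀ (by positivity)]
        calc Real.exp (-(2*y^2)) * ((-y) * Real.sqrt (2*π))
            = (Real.sqrt (2*π) * (-y)) * Real.exp (-(2*y^2)) := by ring
          _ ≤ Real.exp (3*y^2/2) * Real.exp (-(2*y^2)) :=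
              mul_le_mul_of_nonneg_right hG (Real.exp_pos _).le
          _ = Real.exp (-y^2/2) := by rw [← Real.exp_add]; ring_nf
      rw [one_div, Real.log_inv]
      have := (Real.le_log_iff_exp_le hv0).mpr hvexp
      linarith
    have hhalf : 1/2 ≤ Real.log (1/v) := by
      rw [show (1:ℝ)/v = v⁻¹ from one_div v, Real.log_inv, le_neg]
      have hvle : v ≤ Real.exp (-(1/2)) := by
        rw [hv_def, div_le_iff₀ (by positivity)]
        have h1 : Real.exp (-y^2/2) = Real.exp (-(1/2)) * Real.exp ((1-y^2)/2) := by
          rw [← Real.exp_add]; ring_nf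
        have h2 : Real.exp ((1-y^2)/2) ≤ Real.exp (5/18) := by
          apply Real.exp_le_exp.mpr
          nlinarith
        have h3 : Real.exp (5/18) ≤ 18/13 := by
          have h := Real.add_one_le_exp (-(5/18):ℝ)
          rw [Real.exp_neg] at h
          have hE := Real.exp_pos (5/18:ℝ)
          have h5 := mul_le_mul_of_nonneg_right h hE.le
          rw [inv_mul_cancel₀ (ne_of_gt hE)] at h5
          linarith
        have h4 : (18:ℝ)/13 ≤ (-y) * Real.sqrt (2*π) := by nlinarith
        calc Real.exp (-y^2/2) = Real.exp (-(1/2)) * Real.exp ((1-y^2)/2) := h1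
          _ ≤ Real.exp (-(1/2)) * (18/13) := by
              apply mul_le_mul_of_nonneg_left (h2.trans h3) (Real.exp_pos _).le
          _ ≤ Real.exp (-(1/2)) * ((-y) * Real.sqrt (2*π)) := by
              apply mul_le_mul_of_nonneg_left h4 (Real.exp_pos _).le
      calc Real.log v ≤ Real.log (Real.exp (-(1/2))) :=
            Real.log_le_log hv0 hvle
        _ = -(1/2) := Real.log_exp _
    have hmono : x^2 * Real.log (1/x) ≤ v^2 * Real.log (1/v) :=
      sq_log_mono hx0 hM hhalf
    have hvy : v^2 * y^2 = Real.exp (-y^2) / (2*π) := by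
      have hE2 : Real.exp (-y^2/2)^2 = Real.exp (-y^2) := by
        rw [sq, ← Real.exp_add]; ring_nf
      have hsq : Real.sqrt (2*π)^2 = 2*π := Real.sq_sqrt (by positivity)
      rw [hv_def, div_pow, mul_pow, hsq, hE2, neg_sq]
      have hy2 : y^2 ≠ 0 := pow_ne_zero 2 (ne_of_lt hy0)
      have hy0' : y ≠ 0 := ne_of_lt hy0
      field_simp
    calc x^2 * ((1/2) * Real.log (1/x)) = (1/2) * (x^2 * Real.log (1/x)) := by ring
      _ ≤ (1/2) * (v^2 * Real.log (1/v)) := by linarith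
      _ ≤ (1/2) * (v^2 * (2*y^2)) := by nlinarith [sq_nonneg v]
      _ = v^2 * y^2 := by ring
      _ = Real.exp (-y^2) / (2*π) := hvy
end

section
/- Let X_1, …, X_N be independent real random variables, and suppose L : [0, 1−ε) → ℝ satisfies P(X_i ≤ L(α)) ≤ 1 − ε − α for each i and each α ∈ [0, 1−ε). Let X_{(Nε)} denote the ⌊Nε⌋-th largest of the X_i. Then for any α ∈ [0, 1−ε), P(X_{(Nε)} ≤ L(α)) ≤ exp(−2α²N). -/
open MeasureTheory ProbabilityTheory

lemma bern_D_pos (p : ℝ) (hp0 : 0 ≤ p) (hp1 : p ≤ 1) (s : ℝ) :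
    0 < 1 - p + p * Real.exp s := by
  rcases le_or_gt (Real.exp s) 1 with h | h
  · nlinarith [Real.exp_pos s, mul_nonneg (sub_nonneg.2 hp1) (sub_nonneg.2 h)]
  · nlinarith [mul_nonneg hp0 (sub_nonneg.2 h.le)]

lemma bern_mgf_le (p t : ℝ) (hp0 : 0 ≤ p) (hp1 : p ≤ 1) (ht : 0 ≤ t) :
    1 - p + p * Real.exp t ≤ Real.exp (p * t + t ^ 2 / 8) := by
  set D : ℝ → ℝ := fun s => 1 - p + p * Real.exp s with hDdef
  have hpos : ∀ s, 0 < D s := bern_D_pos p hp0 hp1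
  have hD : ∀ s, HasDerivAt D (p * Real.exp s) s := fun s =>
    ((Real.hasDerivAt_exp s).const_mul p).const_add (1 - p)
  -- h is the derivative of g
  set h : ℝ → ℝ := fun s => p * Real.exp s / D s - (p + s / 4) with hhdef
  have hh : ∀ s, HasDerivAt h
      ((p * Real.exp s * D s - p * Real.exp s * (p * Real.exp s)) / (D s) ^ 2 - 1 / 4) s := by
    intro s
    have h1 : HasDerivAt (fun u => p * Real.exp u / D u)
        ((p * Real.exp s * D s - p * Real.exp s * (p * Real.exp s)) / (D s) ^ 2) s :=
      (((Real.hasDerivAt_exp s).const_mul p)).div (hD s) (hpos s).ne'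
    have h2 : HasDerivAt (fun u : ℝ => p + u / 4) (1 / 4) s := by
      simpa using (((hasDerivAt_id s).div_const 4).const_add p)
    exact h1.sub h2
  have hh' : ∀ s, deriv h s ≤ 0 := by
    intro s
    rw [(hh s).deriv]
    have hDs := hpos s
    have he := Real.exp_pos s
    rw [sub_nonpos, div_le_iff₀ (by positivity)]
    have hexpand : p * Real.exp s * D s - p * Real.exp s * (p * Real.exp s)
        = (p * Real.exp s) * (1 - p) := by
      simp only [hDdef]; ring
    have hDeq : D s = 1 - p + p * Real.exp s := rfl
    nlinarith [sq_nonneg (1 - p - p * Real.exp s)]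
  have hanti : Antitone h :=
    antitone_of_deriv_nonpos (fun s => (hh s).differentiableAt) hh'
  have hh0 : h 0 = 0 := by
    simp only [hhdef, hDdef, Real.exp_zero, mul_one]
    have : 1 - p + p = 1 := by ring
    rw [this]
    simp
  -- now g
  set g : ℝ → ℝ := fun s => Real.log (D s) - (p * s + s ^ 2 / 8) with hgdef
  have hg : ∀ s, HasDerivAt g (h s) s := by
    intro s
    have h1 : HasDerivAt (fun u => Real.log (D u)) (p * Real.exp s / D s) s :=
      (hD s).log (hpos s).ne'
    have h2 : HasDerivAt (fun u : ℝ => p * u + u ^ 2 / 8) (p + 2 * s / 8) s := by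
      have := (((hasDerivAt_id s).const_mul p)).add ((hasDerivAt_pow 2 s).div_const 8)
      exact this.congr_deriv (by simp)
    have := h1.sub h2
    exact this.congr_deriv (by simp only [hhdef]; ring)
  have hganti : AntitoneOn g (Set.Ici 0) := by
    refine antitoneOn_of_deriv_nonpos (convex_Ici 0)
      (fun s _ => ((hg s).continuousAt).continuousWithinAt)
      (fun s _ => ((hg s).differentiableAt).differentiableWithinAt) ?_
    intro s hs
    rw [(hg s).deriv]
    have : h s ≤ h 0 := hanti (le_of_lt (by simpa using hs))
    rw [hh0] at this; exact this
  have hgt : g t ≤ g 0 := hganti (Set.self_mem_Ici) (Set.mem_Ici.2 ht) ht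
  have hg0 : g 0 = 0 := by
    simp only [hgdef, hDdef, Real.exp_zero, mul_one]
    have : 1 - p + p = 1 := by ring
    rw [this]
    simp
  rw [hg0] at hgt
  have : Real.log (D t) ≤ p * t + t ^ 2 / 8 := by
    have := hgt
    simp only [hgdef] at this
    linarith
  calc D t = Real.exp (Real.log (D t)) := (Real.exp_log (hpos t)).symm
    _ ≤ Real.exp (p * t + t ^ 2 / 8) := Real.exp_le_exp.2 this


/-- Order-statistic tail bound: if X₁,…,X_N are independent and each satisfies
    P(Xᵢ ≤ L(α)) ≤ 1 − ε − α, then the ⌊Nε⌋-th largest value X_{(Nε)} satisfies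
    P(X_{(Nε)} ≤ L(α)) ≤ exp(−2α²N), where the event {X_{(Nε)} ≤ L(α)} is the
    event that at least N − ⌊Nε⌋ of the Xᵢ are ≤ L(α). -/
theorem order_statistic_tail_bound {Ω : Type*} [MeasureSpace Ω]
    [IsProbabilityMeasure (ℙ : Measure Ω)]
    (N : ℕ) (ε : ℝ) (hε0 : 0 < ε) (hε1 : ε < 1)
    (X : Fin N → Ω → ℝ) (hmeas : ∀ i, Measurable (X i))
    (hind : iIndepFun X ℙ)
    (L : ℝ → ℝ)
    (hL : ∀ i, ∀ α, 0 ≤ α → α < 1 - ε →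
      (ℙ {ω | X i ω ≤ L α}).toReal ≤ 1 - ε - α)
    (α : ℝ) (hα0 : 0 ≤ α) (hα : α < 1 - ε) :
    (ℙ {ω | N - ⌊(N : ℝ) * ε⌋₊
        ≤ (Finset.univ.filter (fun i => X i ω ≤ L α)).card}).toReal
      ≤ Real.exp (-2 * α ^ 2 * N) := by

  classical
  set t : ℝ := 4 * α with htdef
  have ht : 0 ≤ t := by positivity
  set q : ℝ := 1 - ε - α with hqdef
  have hq0 : 0 ≤ q := by simp only [hqdef]; linarith
  have hq1 : q ≤ 1 := by simp only [hqdef]; linarith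
  set f : ℝ → ℝ := fun x => if x ≤ L α then 1 else 0 with hfdef
  have hf : Measurable f :=
    Measurable.ite measurableSet_Iic measurable_const measurable_const
  set Y : Fin N → Ω → ℝ := fun i => f ∘ X i with hYdef
  have hYmeas : ∀ i, Measurable (Y i) := fun i => hf.comp (hmeas i)
  have hYind : iIndepFun Y ℙ :=
    hind.comp (fun _ => f) (fun _ => hf)
  set A : Fin N → Set Ω := fun i => {ω | X i ω ≤ L α} with hAdef
  have hA : ∀ i, MeasurableSet (A i) := fun i => (hmeas i) measurableSet_Iic
  have hYind' : ∀ i ω, Y i ω = (A i).indicator (fun _ => (1 : ℝ)) ω := by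
    intro i ω
    simp [hYdef, hfdef, hAdef, Set.indicator_apply]
  have hYint : ∀ i, Integrable (Y i) ℙ := by
    intro i
    have : Integrable ((A i).indicator fun _ => (1 : ℝ)) ℙ :=
      (integrable_const 1).indicator (hA i)
    exact this.congr (Filter.Eventually.of_forall fun ω => (hYind' i ω).symm)
  have hYintegral : ∀ i, ∫ ω, Y i ω = (ℙ (A i)).toReal := by
    intro i
    rw [integral_congr_ae (Filter.Eventually.of_forall fun ω => hYind' i ω)]
    rw [integral_indicator_const (1 : ℝ) (hA i)]
    simp
    rfl
  have hexp_eq : ∀ i ω, Real.exp (t * Y i ω) = 1 + (Real.exp t - 1) * Y i ω := by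
    intro i ω
    by_cases h : X i ω ≤ L α
    · simp [hYdef, hfdef, h]
    · simp [hYdef, hfdef, h]
  have hint : ∀ i, Integrable (fun ω => Real.exp (t * Y i ω)) ℙ := by
    intro i
    have : Integrable (fun ω => 1 + (Real.exp t - 1) * Y i ω) ℙ :=
      (integrable_const 1).add ((hYint i).const_mul _)
    exact this.congr (Filter.Eventually.of_forall fun ω => (hexp_eq i ω).symm)
  have he1 : (1 : ℝ) ≤ Real.exp t := by
    rw [← Real.exp_zero]; exact Real.exp_le_exp.2 ht
  have hmgf_le : ∀ i, mgf (Y i) ℙ t ≤ Real.exp (q * t + t ^ 2 / 8) := by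
    intro i
    have h1 : mgf (Y i) ℙ t = 1 + (Real.exp t - 1) * (ℙ (A i)).toReal := by
      rw [mgf]
      rw [integral_congr_ae (Filter.Eventually.of_forall fun ω => hexp_eq i ω)]
      rw [integral_add (integrable_const 1) ((hYint i).const_mul _)]
      rw [MeasureTheory.integral_const_mul]
      simp [hYintegral i]
    have hP : (ℙ (A i)).toReal ≤ q := hL i α hα0 hα
    have h2 : mgf (Y i) ℙ t ≤ 1 - q + q * Real.exp t := by
      rw [h1]
      nlinarith [ENNReal.toReal_nonneg (a := ℙ (A i))]
    exact h2.trans (bern_mgf_le q t hq0 hq1 ht)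
  set S : Ω → ℝ := ∑ i, Y i with hSdef
  have hintS : Integrable (fun ω => Real.exp (t * S ω)) ℙ :=
    hYind.integrable_exp_mul_sum hYmeas (fun i _ => hint i)
  have hmgfS : mgf S ℙ t ≤ Real.exp ((N : ℝ) * (q * t + t ^ 2 / 8)) := by
    rw [hSdef, hYind.mgf_sum hYmeas]
    calc ∏ i, mgf (Y i) ℙ t ≤ ∏ _i : Fin N, Real.exp (q * t + t ^ 2 / 8) :=
          Finset.prod_le_prod (fun i _ => mgf_nonneg) (fun i _ => hmgf_le i)
      _ = Real.exp ((N : ℝ) * (q * t + t ^ 2 / 8)) := by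
          rw [Finset.prod_const, ← Real.exp_nat_mul]
          simp
  set c : ℝ := ((N - ⌊(N : ℝ) * ε⌋₊ : ℕ) : ℝ) with hcdef
  -- event equality
  have hset : {ω | N - ⌊(N : ℝ) * ε⌋₊
        ≤ (Finset.univ.filter (fun i => X i ω ≤ L α)).card} = {ω | c ≤ S ω} := by
    ext ω
    simp only [Set.mem_setOf_eq]
    have hcard : ((Finset.univ.filter (fun i => X i ω ≤ L α)).card : ℝ) = S ω := by
      rw [Finset.card_filter]
      push_cast
      rw [hSdef, Finset.sum_apply]
      exact Finset.sum_congr rfl fun i _ => by simp [hYdef, hfdef]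
    rw [← Nat.cast_le (α := ℝ), hcard]
  -- floor bounds
  have hfl1 : (⌊(N : ℝ) * ε⌋₊ : ℝ) ≤ (N : ℝ) * ε := Nat.floor_le (by positivity)
  have hfl2 : ⌊(N : ℝ) * ε⌋₊ ≤ N := by
    have : ((⌊(N : ℝ) * ε⌋₊ : ℕ) : ℝ) ≤ (N : ℝ) :=
      hfl1.trans (by nlinarith [Nat.cast_nonneg (α := ℝ) N])
    exact_mod_cast this
  have hcge : (N : ℝ) * (1 - ε) ≤ c := by
    rw [hcdef, Nat.cast_sub hfl2]
    nlinarith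
  -- Chernoff
  have hchern := measure_ge_le_exp_mul_mgf (X := S) (μ := ℙ) c ht hintS
  rw [hset]
  refine hchern.trans ?_
  have hstep : Real.exp (-t * c) * mgf S ℙ t
      ≤ Real.exp (-t * c) * Real.exp ((N : ℝ) * (q * t + t ^ 2 / 8)) :=
    mul_le_mul_of_nonneg_left hmgfS (Real.exp_pos _).le
  refine hstep.trans ?_
  rw [← Real.exp_add]
  apply Real.exp_le_exp.2
  have hNnn : (0 : ℝ) ≤ (N : ℝ) := Nat.cast_nonneg N
  have h4 : -t * c ≤ -t * ((N : ℝ) * (1 - ε)) := by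
    apply neg_le_neg at hcge
    nlinarith
  have : -t * ((N : ℝ) * (1 - ε)) + (N : ℝ) * (q * t + t ^ 2 / 8)
      = -2 * α ^ 2 * N := by
    rw [htdef, hqdef]; ring
  linarith
end
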